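/- arXiv:1305.6410 — 4 statements merged into one kernel-verified Lean document; each statement's English description precedes it below -/
import Mathlib

section
/- Y₊ and Y₋ are orthogonal projections (self-adjoint idempotent bounded operators on H), and T*T = (1/8)(id + 𝐈 + 6Y₊). -/
/- In SL(2,ℤ) set L := [[1,1],[0,1]], R := [[1,0],[1,1]], J := [[0,1],[-1,0]],
-1 := [[-1,0],[0,-1]].  Let H be a complex Hilbert space and ρ a unitary
representation of SL(2,ℤ) on H.  With 𝐋 := ρ(L), 𝐑 := ρ(R), 𝐉 := ρ(J), 𝐈 := ρ(-1),
T := (𝐋 + 𝐑)/2, Y₊ := (1/3)((3/2)·id − (1/2)𝐈 + 𝐑⁻¹𝐋 + 𝐋⁻¹𝐑), Y₋ := 𝐉*Y₊𝐉,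
the operators Y₊ and Y₋ are orthogonal projections (self-adjoint idempotents) and
T*T = (1/8)(id + 𝐈 + 6Y₊). -/

noncomputable section

abbrev SL2Z := Matrix.SpecialLinearGroup (Fin 2) ℤ

def Lmat : SL2Z := ⟨!![1, 1; 0, 1], by decide⟩
def Rmat : SL2Z := ⟨!![1, 0; 1, 1], by decide⟩
def Jmat : SL2Z := ⟨!![0, 1; -1, 0], by decide⟩
def Imat : SL2Z := ⟨!![-1, 0; 0, -1], by decide⟩

variable {H : Type*} [NormedAddCommGroup H] [InnerProductSpace ℂ H] [CompleteSpace H]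

/-- The bounded operator associated to a group element by the unitary representation. -/
def rop (ρ : SL2Z →* unitary (H →L[ℂ] H)) (g : SL2Z) : H →L[ℂ] H := (ρ g : H →L[ℂ] H)

/-- The Markov operator T = (𝐋 + 𝐑)/2. -/
def opT (ρ : SL2Z →* unitary (H →L[ℂ] H)) : H →L[ℂ] H := (2 : ℂ)⁻¹ • (rop ρ Lmat + rop ρ Rmat)

/-- Y₊ = (1/3)((3/2)·id − (1/2)𝐈 + 𝐑⁻¹𝐋 + 𝐋⁻¹𝐑). -/
def opYp (ρ : SL2Z →* unitary (H →L[ℂ] H)) : H →L[ℂ] H :=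
  (3 : ℂ)⁻¹ • ((3 / 2 : ℂ) • (1 : H →L[ℂ] H) - (2 : ℂ)⁻¹ • rop ρ Imat
    + rop ρ Rmat⁻¹ * rop ρ Lmat + rop ρ Lmat⁻¹ * rop ρ Rmat)

/-- Y₋ = 𝐉* Y₊ 𝐉. -/
def opYm (ρ : SL2Z →* unitary (H →L[ℂ] H)) : H →L[ℂ] H :=
  ContinuousLinearMap.adjoint (rop ρ Jmat) * opYp ρ * rop ρ Jmat

/- With A := 𝐑⁻¹𝐋 = ρ(R⁻¹L) we have 𝐋⁻¹𝐑 = A* and 𝐈 = A³, and A⁶ = 1 because R⁻¹L has order 6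
in SL(2,ℤ). So 6Y₊ = 3 - A³ + 2(A + A*) is a polynomial in the unitary A, and its symbol
3 - λ³ + 2(λ + λ⁻¹) equals 6 at the sixth roots of unity 1, e^{±iπ/3} and 0 at the other three;
this makes Y₊ a projection, realised by the identity P² = 6P + (4X⁴ - 4X² + 9)(X⁶ - 1).
Y₋ is a unitary conjugate of Y₊, and T*T = (2 + A + A*)/4 = (1 + A³ + 6Y₊)/8 by expanding. -/

open Polynomial

lemma star_eq_pow_of_pow_succ_eq_one {M : Type*} [Monoid M] [StarMul M] {a : M}
    (ha : a ∈ unitary M) {n : ℕ} (h : a ^ (n + 1) = 1) : star a = a ^ n :=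
  calc star a = star a * a ^ (n + 1) := by rw [h, mul_one]
    _ = a ^ n := by rw [pow_succ', ← mul_assoc, Unitary.star_mul_self_of_mem ha, one_mul]

lemma IsStarProjection.star_mul_mul {S : Type*} [Semiring S] [StarMul S] {p u : S}
    (hp : IsStarProjection p) (hu : u ∈ unitary S) : IsStarProjection (star u * p * u) := by
  simpa using hp.map (Unitary.conjStarAlgAut ℕ S (star ⟨u, hu⟩))

lemma mul_self_eq_six_smul_of_pow_six_eq_one {R : Type*} [Ring R] [Algebra ℂ R] {a : R}
    (h : a ^ 6 = 1) :
    ((3 : ℂ) • 1 - a ^ 3 + (2 : ℂ) • (a + a ^ 5)) * ((3 : ℂ) • 1 - a ^ 3 + (2 : ℂ) • (a + a ^ 5)) =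
      (6 : ℂ) • ((3 : ℂ) • 1 - a ^ 3 + (2 : ℂ) • (a + a ^ 5)) := by
  have hX : ((3 : ℂ) • 1 - X ^ 3 + (2 : ℂ) • (X + X ^ 5) : ℂ[X]) *
        ((3 : ℂ) • 1 - X ^ 3 + (2 : ℂ) • (X + X ^ 5)) =
      (6 : ℂ) • ((3 : ℂ) • 1 - X ^ 3 + (2 : ℂ) • (X + X ^ 5)) +
        ((4 : ℂ) • X ^ 4 - (4 : ℂ) • X ^ 2 + (9 : ℂ) • 1) * (X ^ 6 - 1) := by
    algebra
  simpa [h] using congrArg (aeval a) hX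

section SixthRoot

variable {R : Type*} [Ring R] [StarRing R] [Algebra ℂ R] [StarModule ℂ R]

def sixthRootProj (a : R) : R := (6 : ℂ)⁻¹ • ((3 : ℂ) • 1 - a ^ 3 + (2 : ℂ) • (a + star a))

lemma isStarProjection_sixthRootProj {a : R} (ha : a ∈ unitary R) (h6 : a ^ 6 = 1) :
    IsStarProjection (sixthRootProj a) := by
  have hstar_cube : star (a ^ 3) = a ^ 3 :=
    (star_eq_pow_of_pow_succ_eq_one (pow_mem ha 3) (by rw [← pow_mul, h6])).trans (pow_one _)
  rw [isStarProjection_iff', sixthRootProj]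
  constructor
  · rw [smul_mul_smul_comm, star_eq_pow_of_pow_succ_eq_one ha h6,
      mul_self_eq_six_smul_of_pow_six_eq_one h6, smul_smul]
    norm_num
  · simp only [star_smul, star_add, star_sub, star_one, star_star, star_inv₀, star_ofNat,
      hstar_cube]
    module

lemma star_half_add_mul_half_add {u v : R} (hu : u ∈ unitary R) (hv : v ∈ unitary R) :
    star ((2 : ℂ)⁻¹ • (u + v)) * ((2 : ℂ)⁻¹ • (u + v)) =
      (4 : ℂ)⁻¹ • ((2 : ℂ) • 1 + star u * v + star v * u) := by
  simp only [star_smul, star_add, star_inv₀, star_ofNat, smul_mul_smul_comm, add_mul, mul_add,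
    Unitary.star_mul_self_of_mem hu, Unitary.star_mul_self_of_mem hv]
  module

end SixthRoot

lemma rop_mem_unitary (ρ : SL2Z →* unitary (H →L[ℂ] H)) (g : SL2Z) :
    rop ρ g ∈ unitary (H →L[ℂ] H) :=
  (ρ g).2

lemma rop_mul (ρ : SL2Z →* unitary (H →L[ℂ] H)) (g h : SL2Z) :
    rop ρ (g * h) = rop ρ g * rop ρ h := by
  simp [rop]

lemma rop_pow (ρ : SL2Z →* unitary (H →L[ℂ] H)) (g : SL2Z) (n : ℕ) :
    rop ρ (g ^ n) = rop ρ g ^ n := by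
  simp [rop]

lemma rop_inv (ρ : SL2Z →* unitary (H →L[ℂ] H)) (g : SL2Z) :
    rop ρ g⁻¹ = star (rop ρ g) := by
  rw [rop, rop, map_inv, ← Unitary.star_eq_inv, Unitary.coe_star]

theorem Yp_Ym_orthogonal_projections_and_TstarT
    (ρ : SL2Z →* unitary (H →L[ℂ] H)) :
    (IsSelfAdjoint (opYp ρ) ∧ opYp ρ * opYp ρ = opYp ρ) ∧
    (IsSelfAdjoint (opYm ρ) ∧ opYm ρ * opYm ρ = opYm ρ) ∧
    ContinuousLinearMap.adjoint (opT ρ) * opT ρ =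
      (8 : ℂ)⁻¹ • ((1 : H →L[ℂ] H) + rop ρ Imat + (6 : ℂ) • opYp ρ) := by
  set g := Rmat⁻¹ * Lmat
  have hg3 : g ^ 3 = Imat := Subtype.ext (by decide)
  have hg6 : g ^ 6 = 1 := Subtype.ext (by decide)
  have hg_inv : Lmat⁻¹ * Rmat = g⁻¹ := by simp [g]
  have hYp : opYp ρ = sixthRootProj (rop ρ g) := by
    rw [opYp, sixthRootProj, ← hg3, rop_pow, ← rop_mul, ← rop_mul, hg_inv, rop_inv]
    module
  have hYp_proj : IsStarProjection (opYp ρ) :=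
    hYp ▸ isStarProjection_sixthRootProj (rop_mem_unitary ρ g) (by rw [← rop_pow, hg6]; simp [rop])
  have hYm_proj : IsStarProjection (opYm ρ) := by
    rw [opYm, ← ContinuousLinearMap.star_eq_adjoint]
    exact hYp_proj.star_mul_mul (rop_mem_unitary ρ Jmat)
  refine ⟨⟨hYp_proj.isSelfAdjoint, hYp_proj.isIdempotentElem⟩,
    ⟨hYm_proj.isSelfAdjoint, hYm_proj.isIdempotentElem⟩, ?_⟩
  rw [← ContinuousLinearMap.star_eq_adjoint, opT,
    star_half_add_mul_half_add (rop_mem_unitary ρ _) (rop_mem_unitary ρ _), ← rop_inv, ← rop_inv,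
    ← rop_mul, ← rop_mul, hg_inv, rop_inv, hYp, sixthRootProj, ← hg3, rop_pow]
  module
end
end

section
/- For every v ∈ H with 𝐈v = −v one has T*(Tv) = (3/4)Y₊v, and the spectrum of T⁻ (the restriction of T to H⁻) is contained in the closed disk D := {z ∈ ℂ : |z| ≤ √3/2}. -/
noncomputable section

variable {H : Type*} [NormedAddCommGroup H] [InnerProductSpace ℂ H] [CompleteSpace H]

/-- H⁻ = {v ∈ H : 𝐈v = −v}, a closed subspace of H. -/
def Hminus (ρ : SL2Z →* unitary (H →L[ℂ] H)) : Submodule ℂ H where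
  carrier := {v | rop ρ Imat v = -v}
  add_mem' := by
    intro a b ha hb
    simp only [Set.mem_setOf_eq, map_add] at *
    rw [ha, hb]; abel
  zero_mem' := by simp
  smul_mem' := by
    intro c v hv
    simp only [Set.mem_setOf_eq, map_smul] at *
    rw [hv, smul_neg]


/-! On `H⁻` one has `T v = ½ 𝐑 (v + Q v)` with `Q = 𝐑⁻¹𝐋` unitary and `Q³ = 𝐈 = -1`.
Expanding `‖v - Q v + Q² v‖² ≥ 0` with `⟪v, Q² v⟫ = ⟪Q v, Q³ v⟫ = -⟪Q v, v⟫` gives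
`re ⟪v, Q v⟫ ≤ ‖v‖² / 2`, hence `‖v + Q v‖² ≤ 3 ‖v‖²` and `‖T⁻‖ ≤ √3 / 2`, which bounds the
spectrum. The identity `T* T = (3/4) Y₊` on `H⁻` is a direct expansion using `𝐈 v = -v`. -/

open scoped InnerProductSpace

theorem LinearIsometry.norm_apply_add_self_le_of_cube_eq_neg {𝕜 E : Type*} [RCLike 𝕜]
    [NormedAddCommGroup E] [InnerProductSpace 𝕜 E] (U : E →ₗᵢ[𝕜] E) {v : E}
    (hv : U (U (U v)) = -v) : ‖U v + v‖ ≤ √3 * ‖v‖ := by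
  have hre : RCLike.re ⟪U v, v⟫_𝕜 = RCLike.re ⟪v, U v⟫_𝕜 := inner_re_symm _ _
  have hsum : ‖U v + v‖ ^ 2 = 2 * ‖v‖ ^ 2 + 2 * RCLike.re ⟪v, U v⟫_𝕜 := by
    rw [@norm_add_sq 𝕜, U.norm_map, hre]; ring
  have hskew : ⟪v, U (U v)⟫_𝕜 = -⟪U v, v⟫_𝕜 := by
    rw [← U.inner_map_map, hv, inner_neg_right]
  have halt : ‖v - U v + U (U v)‖ ^ 2 = 3 * ‖v‖ ^ 2 - 6 * RCLike.re ⟪v, U v⟫_𝕜 := by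
    rw [@norm_add_sq 𝕜, @norm_sub_sq 𝕜, inner_sub_left, U.inner_map_map, hskew, U.norm_map,
      U.norm_map, U.norm_map, map_sub, map_neg, hre]
    ring
  have hsq : ‖U v + v‖ ^ 2 ≤ (√3 * ‖v‖) ^ 2 := by
    rw [mul_pow, Real.sq_sqrt zero_le_three]
    nlinarith [sq_nonneg ‖v - U v + U (U v)‖]
  exact (pow_le_pow_iff_left₀ (norm_nonneg _) (by positivity) two_ne_zero).mp hsq

theorem ContinuousLinearMap.spectrum_subset_closedBall_of_norm_apply_le {𝕜 E : Type*}
    [NontriviallyNormedField 𝕜] [NormedAddCommGroup E] [NormedSpace 𝕜 E] [CompleteSpace E]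
    (f : E →L[𝕜] E) {c : ℝ} (hc : 0 ≤ c) (hf : ∀ x, ‖f x‖ ≤ c * ‖x‖) :
    spectrum 𝕜 f ⊆ Metric.closedBall 0 c := fun z hz => by
  have hnorm : ‖f‖ * ‖(1 : E →L[𝕜] E)‖ ≤ c :=
    (mul_le_of_le_one_right (norm_nonneg f) norm_id_le).trans (f.opNorm_le_bound hc hf)
  simpa using (spectrum.norm_le_norm_mul_of_mem hz).trans hnorm

theorem Rmat_inv_mul_Lmat_cube : (Rmat⁻¹ * Lmat) * ((Rmat⁻¹ * Lmat) * (Rmat⁻¹ * Lmat)) = Imat := by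
  have hQ : Rmat⁻¹ * Lmat = ⟨!![1, 1; -1, 0], by decide⟩ :=
    inv_mul_eq_of_eq_mul (Subtype.ext (by decide))
  rw [hQ]; exact Subtype.ext (by decide)

section Representation

variable (ρ : SL2Z →* unitary (H →L[ℂ] H))

theorem rop_mul_apply (g h : SL2Z) (v : H) : rop ρ (g * h) v = rop ρ g (rop ρ h v) := by
  rw [rop, map_mul]; rfl

theorem rop_inv_apply (g : SL2Z) (v : H) : rop ρ g⁻¹ (rop ρ g v) = v := by
  rw [← rop_mul_apply, inv_mul_cancel, rop, map_one]; rfl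

theorem norm_rop_apply (g : SL2Z) (v : H) : ‖rop ρ g v‖ = ‖v‖ :=
  Unitary.norm_map (ρ g) v

theorem adjoint_opT : (opT ρ).adjoint = (2 : ℂ)⁻¹ • (rop ρ Lmat⁻¹ + rop ρ Rmat⁻¹) := by
  simp only [← ContinuousLinearMap.star_eq_adjoint, opT, star_smul, star_add, rop, map_inv,
    ← Unitary.star_eq_inv, Unitary.coe_star, star_inv₀, star_ofNat]

theorem adjoint_opT_opT_apply {v : H} (hv : rop ρ Imat v = -v) :
    (opT ρ).adjoint (opT ρ v) = (3 / 4 : ℂ) • opYp ρ v := by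
  rw [adjoint_opT]
  simp only [opYp, opT, smul_apply, add_apply, sub_apply, mul_apply_eq_comp,
    one_apply_eq_self, map_smul, map_add, hv, rop_inv_apply]
  module

theorem isClosed_Hminus : IsClosed (Hminus ρ : Set H) :=
  isClosed_eq (rop ρ Imat).continuous continuous_neg

instance : CompleteSpace (Hminus ρ) := (isClosed_Hminus ρ).completeSpace_coe

theorem norm_opT_apply_le {v : H} (hv : v ∈ Hminus ρ) : ‖opT ρ v‖ ≤ √3 / 2 * ‖v‖ := by
  let U := (Unitary.linearIsometryEquiv (ρ (Rmat⁻¹ * Lmat))).toLinearIsometry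
  have hU (x : H) : U x = rop ρ (Rmat⁻¹ * Lmat) x := rfl
  have hcube : U (U (U v)) = -v := by
    simp only [hU, ← rop_mul_apply, Rmat_inv_mul_Lmat_cube]; exact hv
  calc ‖opT ρ v‖ = 2⁻¹ * ‖rop ρ Rmat⁻¹ (rop ρ Lmat v + rop ρ Rmat v)‖ := by
        rw [opT, smul_apply, norm_smul, norm_rop_apply]; norm_num
    _ = 2⁻¹ * ‖U v + v‖ := by rw [map_add, rop_inv_apply, hU, rop_mul_apply]
    _ ≤ 2⁻¹ * (√3 * ‖v‖) := by gcongr; exact U.norm_apply_add_self_le_of_cube_eq_neg hcube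
    _ = √3 / 2 * ‖v‖ := by ring

end Representation

/-- For every v with 𝐈v = −v one has T*(Tv) = (3/4)Y₊v, and the spectrum of T⁻
(the restriction of T to H⁻) is contained in the closed disk of radius √3/2. -/
theorem Tminus_spectrum_in_disk (ρ : SL2Z →* unitary (H →L[ℂ] H)) :
    (∀ v : H, rop ρ Imat v = -v →
      ContinuousLinearMap.adjoint (opT ρ) (opT ρ v) = (3 / 4 : ℂ) • opYp ρ v) ∧
    (∀ Tm : Hminus ρ →L[ℂ] Hminus ρ,
      (∀ v : Hminus ρ, (Tm v : H) = opT ρ (v : H)) →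
      spectrum ℂ Tm ⊆ {z : ℂ | ‖z‖ ≤ Real.sqrt 3 / 2}) := by
  refine ⟨fun v hv => adjoint_opT_opT_apply ρ hv, fun Tm hTm z hz => ?_⟩
  have hbound (v : Hminus ρ) : ‖Tm v‖ ≤ √3 / 2 * ‖v‖ := by
    simpa only [Submodule.coe_norm, hTm v] using norm_opT_apply_le ρ v.2
  simpa using Tm.spectrum_subset_closedBall_of_norm_apply_le (by positivity) hbound hz
end
end

section
/- For every k ≥ 1, if D is a bounded operator on ℓ²(V; ℂ) satisfying (D f)(v) = Σ_{w : dist(v,w) = k} f(w) for all f ∈ ℓ²(V; ℂ) and all vertices v (where dist denotes graph distance), then the operator norm of D satisfies ‖D‖ ≤ 3·k·2^{k/2}. -/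
/-!
Schur test with the weight `v ↦ √2 ^ dist(o, v)` for a fixed root `o`. In the tree, a vertex `w`
at distance `k` from `v` is reached by going `j` steps from `v` towards `o`, to a vertex `m` that
depends only on `j`, and then `k - j` steps away from `o`; so `dist(o, w) = dist(o, v) + k - 2j`
and, by 3-regularity, there are at most `3 · 2^(k-j-1)` such `w` for `j < k` (one for `j = k`).
Each of the `k + 1` values of `j` then contributes at most `(3/2) · √2 ^ k` to the weighted row
sum, which is therefore at most `3 k √2 ^ k`.
-/

namespace lp

variable {V E : Type*} [NormedAddCommGroup E]

theorem norm_le_of_schur_test {N : V → Finset V} (hN : ∀ v w, w ∈ N v ↔ v ∈ N w)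
    {p : V → ℝ} (hp : ∀ v, 0 < p v) {B : ℝ} (hB : 0 ≤ B)
    (hrow : ∀ v, ∑ w ∈ N v, p v / p w ≤ B) {f g : lp (fun _ : V => E) 2}
    (hg : ∀ v, g v = ∑ w ∈ N v, f w) : ‖g‖ ≤ B * ‖f‖ := by
  classical
  have two_pos : (0 : ℝ) < (2 : ENNReal).toReal := by norm_num
  refine norm_le_of_forall_sum_le two_pos (by positivity) fun s => ?_
  simp only [ENNReal.toReal_ofNat, Real.rpow_two]
  -- weighted Cauchy–Schwarz, with weights `p v / p w` and `p w / p v` whose product is `1`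
  have hpoint : ∀ v, ‖g v‖ ^ 2 ≤ B * ∑ w ∈ N v, p w / p v * ‖f w‖ ^ 2 := fun v => calc
    ‖g v‖ ^ 2 ≤ (∑ w ∈ N v, ‖f w‖) ^ 2 := by
      gcongr; rw [hg]; exact norm_sum_le _ _
    _ ≤ (∑ w ∈ N v, p v / p w) * ∑ w ∈ N v, p w / p v * ‖f w‖ ^ 2 := by
      refine Finset.sum_sq_le_sum_mul_sum_of_sq_le_mul _ (fun w _ => (div_pos (hp v) (hp w)).le)
        (fun w _ => by have := hp v; have := hp w; positivity) fun w _ => le_of_eq ?_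
      field_simp [(hp v).ne', (hp w).ne']
    _ ≤ B * ∑ w ∈ N v, p w / p v * ‖f w‖ ^ 2 := by
      gcongr
      · exact Finset.sum_nonneg fun w _ => by have := hp v; have := hp w; positivity
      · exact hrow v
  have hswap : ∑ v ∈ s, ∑ w ∈ N v, p w / p v * ‖f w‖ ^ 2
      ≤ ∑ w ∈ s.biUnion N, ‖f w‖ ^ 2 * ∑ v ∈ N w, p w / p v := calc
    _ = ∑ w ∈ s.biUnion N, ∑ v ∈ (N w).filter (· ∈ s), p w / p v * ‖f w‖ ^ 2 :=
      Finset.sum_comm' fun v w => by simp only [Finset.mem_filter, Finset.mem_biUnion]; grind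
    _ ≤ ∑ w ∈ s.biUnion N, ∑ v ∈ N w, p w / p v * ‖f w‖ ^ 2 := by
      refine Finset.sum_le_sum fun w _ => Finset.sum_le_sum_of_subset_of_nonneg
        (Finset.filter_subset _ _) fun v _ _ => ?_
      have := hp v; have := hp w; positivity
    _ = _ := by simp only [Finset.mul_sum, mul_comm]
  have hcol : ∑ w ∈ s.biUnion N, ‖f w‖ ^ 2 * ∑ v ∈ N w, p w / p v ≤ B * ‖f‖ ^ 2 := calc
    _ ≤ ∑ w ∈ s.biUnion N, ‖f w‖ ^ 2 * B := by gcongr with w; exact hrow w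
    _ = B * ∑ w ∈ s.biUnion N, ‖f w‖ ^ 2 := by rw [Finset.mul_sum]; simp only [mul_comm]
    _ ≤ B * ‖f‖ ^ 2 := by
      gcongr
      simpa only [ENNReal.toReal_ofNat, Real.rpow_two] using sum_rpow_le_norm_rpow two_pos f _
  calc ∑ v ∈ s, ‖g v‖ ^ 2 ≤ ∑ v ∈ s, B * ∑ w ∈ N v, p w / p v * ‖f w‖ ^ 2 :=
        Finset.sum_le_sum fun v _ => hpoint v
    _ = B * ∑ v ∈ s, ∑ w ∈ N v, p w / p v * ‖f w‖ ^ 2 := by rw [Finset.mul_sum]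
    _ ≤ B * (B * ‖f‖ ^ 2) := by gcongr; exact hswap.trans hcol
    _ = (B * ‖f‖) ^ 2 := by ring

end lp

namespace SimpleGraph

variable {V : Type*} {G : SimpleGraph V}

lemma exists_adj_dist_eq_of_dist_eq_add_one {u w : V} {n : ℕ} (h : G.dist u w = n + 1) :
    ∃ x, G.Adj x w ∧ G.dist u x = n := by
  have hreach : G.Reachable u w := Reachable.of_dist_ne_zero (by omega)
  obtain ⟨p, hp⟩ := hreach.exists_walk_length_eq_dist
  have hnil : ¬p.Nil := Walk.not_nil_iff_lt_length.mpr (by omega)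
  refine ⟨p.penultimate, p.adj_penultimate hnil, ?_⟩
  have hle : G.dist u p.penultimate ≤ n := by
    simpa [Walk.length_dropLast, hp, h] using dist_le p.dropLast
  have := (p.adj_penultimate hnil).diff_dist_adj (u := u)
  omega

lemma encard_setOf_dist_eq_add_one_le {d : ℕ} (hdeg : ∀ v, (G.neighborSet v).encard ≤ d)
    (u : V) (n : ℕ) : {w | G.dist u w = n + 1}.encard ≤ (d * (d - 1) ^ n : ℕ) := by
  induction n with
  | zero =>
    simp only [zero_add, dist_eq_one_iff_adj, pow_zero, mul_one]
    exact hdeg u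
  | succ n ih =>
    have hfin := Set.finite_of_encard_le_coe ih
    have hcover : {w | G.dist u w = n + 1 + 1} ⊆
        ⋃ x ∈ hfin.toFinset, G.neighborSet x ∩ {w | G.dist u w = n + 1 + 1} := by
      intro w hw
      obtain ⟨x, hxw, hx⟩ := exists_adj_dist_eq_of_dist_eq_add_one hw
      simp only [Set.mem_iUnion, Set.Finite.mem_toFinset]
      exact ⟨x, hx, hxw, hw⟩
    -- each vertex at distance `n + 1` has a neighbour at distance `n`, which is not counted
    have hchildren : ∀ x ∈ hfin.toFinset,
        (G.neighborSet x ∩ {w | G.dist u w = n + 1 + 1}).encard ≤ (d - 1 : ℕ) := by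
      intro x hx
      obtain ⟨z, hzx, hz⟩ := exists_adj_dist_eq_of_dist_eq_add_one (hfin.mem_toFinset.mp hx)
      calc _ ≤ (G.neighborSet x \ {z}).encard := by
            refine Set.encard_le_encard fun y ⟨hy, hyd⟩ => ⟨hy, ?_⟩
            rintro rfl
            have : G.dist u y = n + 1 + 1 := hyd
            omega
        _ = (G.neighborSet x).encard - 1 := Set.encard_sdiff_singleton_of_mem hzx.symm
        _ ≤ (d - 1 : ℕ) := by rw [ENat.natCast_sub]; exact tsub_le_tsub_right (hdeg x) 1
    have hcard : hfin.toFinset.card ≤ d * (d - 1) ^ n := by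
      rw [← hfin.coe_toFinset, Set.encard_coe_eq_coe_finsetCard] at ih
      exact_mod_cast ih
    calc _ ≤ _ := Set.encard_le_encard hcover
      _ ≤ _ := Finset.set_encard_biUnion_le _ _
      _ ≤ hfin.toFinset.card • ((d - 1 : ℕ) : ℕ∞) := Finset.sum_le_card_nsmul _ _ _ hchildren
      _ ≤ (d * (d - 1) ^ (n + 1) : ℕ) := by
        rw [nsmul_eq_mul, ← Nat.cast_mul, Nat.cast_le, pow_succ, ← mul_assoc]
        exact Nat.mul_le_mul_right _ hcard

lemma Connected.encard_setOf_dist_eq_le (hconn : G.Connected) {d : ℕ}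
    (hdeg : ∀ v, (G.neighborSet v).encard ≤ d) (u : V) (n : ℕ) :
    ((d - 1 : ℕ) : ℕ∞) * {w | G.dist u w = n}.encard ≤ (d * (d - 1) ^ n : ℕ) := by
  cases n with
  | zero =>
    have hball : {w | G.dist u w = 0} = {u} := by
      ext w
      simp [hconn.dist_eq_zero_iff, eq_comm]
    rw [hball, Set.encard_singleton, mul_one, pow_zero, mul_one, Nat.cast_le]
    exact Nat.sub_le d 1
  | succ n =>
    calc _ ≤ ((d - 1 : ℕ) : ℕ∞) * (d * (d - 1) ^ n : ℕ) :=
          mul_le_mul_right (encard_setOf_dist_eq_add_one_le hdeg u n) _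
      _ = (d * (d - 1) ^ (n + 1) : ℕ) := by push_cast; ring

lemma IsAcyclic.eq_of_adj_of_dist_add_one_eq (hG : G.IsAcyclic) {o u x y : V}
    (hx : G.Adj x u) (hy : G.Adj y u) (hxu : G.dist o x + 1 = G.dist o u)
    (hyu : G.dist o y + 1 = G.dist o u) : x = y := by
  have hreach : G.Reachable o u := Reachable.of_dist_ne_zero (by omega)
  obtain ⟨p, -, hp⟩ := (hreach.trans hx.symm.reachable).exists_path_of_dist
  obtain ⟨q, -, hq⟩ := (hreach.trans hy.symm.reachable).exists_path_of_dist
  have hpx : (p.concat hx).IsPath := Walk.isPath_of_length_eq_dist _ (by simp [hp, hxu])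
  have hqy : (q.concat hy).IsPath := Walk.isPath_of_length_eq_dist _ (by simp [hq, hyu])
  have heq := congrArg Subtype.val <| (hG.subsingleton_path o u).elim ⟨_, hpx⟩ ⟨_, hqy⟩
  exact (Walk.concat_inj heq).1

namespace IsTree

variable (hG : G.IsTree)
include hG

lemma exists_median (o v w : V) : ∃ m, G.dist v m + G.dist m o = G.dist v o ∧
    G.dist v m + G.dist m w = G.dist v w ∧ G.dist m o + G.dist m w = G.dist o w := by
  have hconn := hG.connected
  have hcomm : ∀ a b : V, G.dist a b = G.dist b a := fun _ _ => dist_comm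
  induction h : G.dist v w generalizing w with
  | zero =>
    obtain rfl := hconn.dist_eq_zero_iff.mp h
    exact ⟨v, by simp [hcomm v o]⟩
  | succ n ih =>
    obtain ⟨w', hadj, hw'⟩ := exists_adj_dist_eq_of_dist_eq_add_one h
    obtain ⟨m, hmo, hmw', how'⟩ := ih w' hw'
    have htri := hconn.dist_triangle (u := v) (v := m) (w := w)
    rcases hG.isAcyclic.dist_eq_dist_add_one_of_adj_of_reachable o hadj (hconn o w') with
      hdown | hup
    · -- `w` is the parent of `w'`, so the median of `o, v, w'` must be `w'` itself
      obtain rfl : m = w' := by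
        rcases hc : G.dist m w' with _ | c
        · exact hconn.dist_eq_zero_iff.mp hc
        obtain ⟨x, hxw', hmx⟩ := exists_adj_dist_eq_of_dist_eq_add_one hc
        have := hconn.dist_triangle (u := o) (v := m) (w := x)
        have := Adj.diff_dist_adj (u := o) hxw'
        have := hcomm m o
        obtain rfl : x = w := hG.isAcyclic.eq_of_adj_of_dist_add_one_eq (o := o) hxw' hadj.symm
          (by omega) (by omega)
        exact absurd htri (by omega)
      refine ⟨w, ?_, by simp [h], by simp [hcomm w o]⟩
      have := hcomm m o
      have := hcomm w o
      omega
    · have := hadj.diff_dist_adj (u := m)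
      refine ⟨m, hmo, ?_, ?_⟩ <;> omega

lemma eq_of_dist_eq_of_dist_add_dist_eq {o v m m' : V} (h : G.dist v m = G.dist v m')
    (hm : G.dist v m + G.dist m o = G.dist v o) (hm' : G.dist v m' + G.dist m' o = G.dist v o) :
    m = m' := by
  have hconn := hG.connected
  have hcomm : ∀ a b : V, G.dist a b = G.dist b a := fun _ _ => dist_comm
  induction hj : G.dist v m generalizing m m' with
  | zero =>
    rw [← hconn.dist_eq_zero_iff.mp hj, ← hconn.dist_eq_zero_iff.mp (h.symm.trans hj)]
  | succ j ih =>
    obtain ⟨x, hxm, hx⟩ := exists_adj_dist_eq_of_dist_eq_add_one hj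
    obtain ⟨x', hxm', hx'⟩ := exists_adj_dist_eq_of_dist_eq_add_one (h ▸ hj)
    have := hconn.dist_triangle (u := v) (v := x) (w := o)
    have := hconn.dist_triangle (u := v) (v := x') (w := o)
    have := hxm.symm.diff_dist_adj (u := o)
    have := hxm'.symm.diff_dist_adj (u := o)
    have := hcomm x o; have := hcomm x' o; have := hcomm m o; have := hcomm m' o
    obtain rfl : x = x' := ih (by omega) (by omega) (by omega) hx
    exact hG.isAcyclic.eq_of_adj_of_dist_add_one_eq (o := o) hxm.symm hxm'.symm (by omega)
      (by omega)

lemma exists_subset_setOf_dist_eq (o v : V) (k j : ℕ) : ∃ m,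
    {w | G.dist v w = k ∧ G.dist o w + 2 * j = G.dist o v + k} ⊆ {w | G.dist m w = k - j} := by
  set S := {w | G.dist v w = k ∧ G.dist o w + 2 * j = G.dist o v + k}
  -- the median of `o, v, w` is the point of the geodesic from `v` to `o` at distance `j` from `v`
  have hmedian : ∀ w ∈ S, ∃ m, G.dist v m = j ∧ G.dist v m + G.dist m o = G.dist v o ∧
      G.dist m w = k - j := by
    rintro w ⟨hw, hwj⟩
    obtain ⟨m, hmo, hmw, how⟩ := hG.exists_median o v w
    have := dist_comm (G := G) (u := o) (v := v)
    exact ⟨m, by omega, hmo, by omega⟩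
  rcases S.eq_empty_or_nonempty with hS | ⟨w₀, hw₀⟩
  · exact ⟨v, by simp [hS]⟩
  obtain ⟨m₀, hm₀, hm₀o, -⟩ := hmedian w₀ hw₀
  refine ⟨m₀, fun w hw => ?_⟩
  obtain ⟨m, hm, hmo, hmw⟩ := hmedian w hw
  rwa [← hG.eq_of_dist_eq_of_dist_add_dist_eq (hm.trans hm₀.symm) hmo hm₀o]

lemma two_mul_sum_two_pow_le (hdeg : ∀ v, (G.neighborSet v).encard ≤ 3) (o v : V) {k : ℕ}
    {F : Finset V} (hF : ∀ w ∈ F, G.dist v w = k) {J : V → ℕ}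
    (hJ : ∀ w ∈ F, G.dist o w + 2 * J w = G.dist o v + k) :
    2 * ∑ w ∈ F, 2 ^ J w ≤ 3 * (k + 1) * 2 ^ k := by
  have hmaps : ∀ w ∈ F, J w ∈ Finset.range (k + 1) := by
    intro w hw
    have := hG.connected.dist_triangle (u := o) (v := w) (w := v)
    have := hJ w hw
    have := hF w hw
    have := dist_comm (G := G) (u := w) (v := v)
    simp only [Finset.mem_range]
    omega
  have hfiber : ∀ j ≤ k, 2 * ((F.filter (J · = j)).card * 2 ^ j) ≤ 3 * 2 ^ k := by
    intro j hj
    obtain ⟨m, hm⟩ := hG.exists_subset_setOf_dist_eq o v k j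
    have hsub : (↑(F.filter (J · = j)) : Set V) ⊆ {w | G.dist m w = k - j} := by
      intro w hw
      obtain ⟨hwF, rfl⟩ := Finset.mem_filter.mp hw
      exact hm ⟨hF w hwF, hJ w hwF⟩
    have hcard : 2 * (F.filter (J · = j)).card ≤ 3 * 2 ^ (k - j) := by
      have := (mul_le_mul_right (Set.encard_le_encard hsub) _).trans
        (hG.connected.encard_setOf_dist_eq_le hdeg m (k - j))
      rw [Set.encard_coe_eq_coe_finsetCard] at this
      exact_mod_cast this
    calc 2 * ((F.filter (J · = j)).card * 2 ^ j) ≤ 3 * 2 ^ (k - j) * 2 ^ j := by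
          rw [← mul_assoc]; exact Nat.mul_le_mul_right _ hcard
      _ = 3 * 2 ^ k := by rw [mul_assoc, ← pow_add, Nat.sub_add_cancel hj]
  calc 2 * ∑ w ∈ F, 2 ^ J w
      = ∑ j ∈ Finset.range (k + 1), 2 * ((F.filter (J · = j)).card * 2 ^ j) := by
        rw [← Finset.sum_fiberwise_of_maps_to hmaps, Finset.mul_sum]
        refine Finset.sum_congr rfl fun j _ => ?_
        rw [Finset.sum_congr rfl fun w hw => by rw [(Finset.mem_filter.mp hw).2],
          Finset.sum_const, smul_eq_mul]
    _ ≤ ∑ _j ∈ Finset.range (k + 1), 3 * 2 ^ k :=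
        Finset.sum_le_sum fun j hj => hfiber j (Nat.lt_succ_iff.mp (Finset.mem_range.mp hj))
    _ = 3 * (k + 1) * 2 ^ k := by rw [Finset.sum_const, Finset.card_range, smul_eq_mul]; ring

lemma sum_sqrt_two_pow_div_le (hdeg : ∀ v, (G.neighborSet v).encard ≤ 3) (o v : V) {k : ℕ}
    (hk : 1 ≤ k) {F : Finset V} (hF : ∀ w ∈ F, G.dist v w = k) :
    ∑ w ∈ F, √2 ^ G.dist o v / √2 ^ G.dist o w ≤ 3 * k * √2 ^ k := by
  set J : V → ℕ := fun w => (G.dist o v + k - G.dist o w) / 2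
  have hJ : ∀ w ∈ F, G.dist o w + 2 * J w = G.dist o v + k := by
    intro w hw
    obtain ⟨m, hmo, hmw, how⟩ := hG.exists_median o v w
    have := dist_comm (G := G) (u := o) (v := v)
    have := hF w hw
    simp only [J]
    omega
  have hterm : ∀ w ∈ F, √2 ^ G.dist o v / √2 ^ G.dist o w = 2 ^ J w / √2 ^ k := by
    intro w hw
    rw [div_eq_div_iff (by positivity) (by positivity), ← pow_add,
      show (2 : ℝ) ^ J w = √2 ^ (2 * J w) by rw [pow_mul, Real.sq_sqrt zero_le_two],
      ← pow_add, add_comm (2 * J w), hJ w hw]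
  have hsum : 2 * ∑ w ∈ F, (2 : ℝ) ^ J w ≤ 3 * (k + 1) * 2 ^ k := by
    exact_mod_cast hG.two_mul_sum_two_pow_le hdeg o v hF hJ
  have hsqrt : (2 : ℝ) ^ k = √2 ^ k * √2 ^ k := by
    rw [← mul_pow, Real.mul_self_sqrt zero_le_two]
  have hk' : (1 : ℝ) ≤ k := by exact_mod_cast hk
  rw [Finset.sum_congr rfl hterm, ← Finset.sum_div, div_le_iff₀ (by positivity), mul_assoc,
    ← hsqrt]
  nlinarith [pow_pos (zero_lt_two (α := ℝ)) k]

end IsTree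

end SimpleGraph

/-- Let G be the 3-regular tree on the vertex type V (connected, acyclic, every vertex with
exactly 3 neighbors).  For k ≥ 1, if D is a bounded operator on ℓ²(V; ℂ) with
(D f)(v) = Σ_{w : dist(v,w) = k} f(w), then ‖D‖ ≤ 3·k·2^{k/2}. -/
theorem norm_distance_k_operator_three_regular_tree
    {V : Type*} (G : SimpleGraph V)
    (hconn : G.Connected) (hacyclic : G.IsAcyclic)
    (hdeg : ∀ v : V, Nat.card (G.neighborSet v) = 3)
    (k : ℕ) (hk : 1 ≤ k)
    (D : lp (fun _ : V => ℂ) 2 →L[ℂ] lp (fun _ : V => ℂ) 2)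
    (hD : ∀ (f : lp (fun _ : V => ℂ) 2) (v : V),
      (D f : ∀ _ : V, ℂ) v = ∑ᶠ w ∈ {w : V | G.dist v w = k}, (f : ∀ _ : V, ℂ) w) :
    ‖D‖ ≤ 3 * k * (2 : ℝ) ^ ((k : ℝ) / 2) := by
  have hG : G.IsTree := ⟨hconn, hacyclic⟩
  have hdeg3 : ∀ v, (G.neighborSet v).encard ≤ 3 := fun v => by
    have hfin : (G.neighborSet v).Finite :=
      Set.finite_of_ncard_ne_zero (by rw [← Nat.card_coe_set_eq, hdeg v]; norm_num)
    rw [← hfin.cast_ncard_eq, ← Nat.card_coe_set_eq, hdeg v]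
    rfl
  have hfin : ∀ v, {w | G.dist v w = k}.Finite := fun v => by
    obtain ⟨n, rfl⟩ := Nat.exists_eq_add_of_le' hk
    exact Set.finite_of_encard_le_coe (G.encard_setOf_dist_eq_add_one_le hdeg3 v n)
  obtain ⟨o⟩ := hconn.nonempty
  rw [show (2 : ℝ) ^ ((k : ℝ) / 2) = √2 ^ k by
    rw [Real.sqrt_eq_rpow, ← Real.rpow_natCast, ← Real.rpow_mul zero_le_two]; ring_nf]
  refine D.opNorm_le_bound (by positivity) fun f =>
    lp.norm_le_of_schur_test (N := fun v => (hfin v).toFinset) (p := fun v => √2 ^ G.dist o v)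
      (fun v w => by simp [SimpleGraph.dist_comm]) (fun v => by positivity) (by positivity)
      (fun v => hG.sum_sqrt_two_pow_div_le hdeg3 o v hk fun w hw => (hfin v).mem_toFinset.mp hw)
      fun v => ?_
  rw [hD f v, finsum_mem_eq_finite_toFinset_sum _ (hfin v)]
end

section
/- Let F : SL(2,ℤ) → ℤ be defined on A = [[a,b],[c,d]] by F(A) := ⌈(ab + cd)/(a² + c²)⌉ (ceiling of the rational number (ab+cd)/(a²+c²); note a² + c² > 0 for A ∈ SL(2,ℤ)). Then for every A ∈ SL(2,ℤ) and every M in the set {±[[-1,-1],[1,0]], ±[[0,1],[-1,-1]], ±[[-1,1],[-1,0]], ±[[0,-1],[1,-1]]} one has |F(MA) − F(A)| ≤ 1. -/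
noncomputable section

/-- F(A) = ⌈(ab + cd)/(a² + c²)⌉ for A = [[a,b],[c,d]] ∈ SL(2,ℤ). -/
def Fceil (A : SL2Z) : ℤ :=
  ⌈((A.1 0 0 * A.1 0 1 + A.1 1 0 * A.1 1 1 : ℤ) : ℚ) /
    ((A.1 0 0 ^ 2 + A.1 1 0 ^ 2 : ℤ) : ℚ)⌉

def M₁ : SL2Z := ⟨!![-1, -1; 1, 0], by decide⟩
def M₂ : SL2Z := ⟨!![0, 1; -1, -1], by decide⟩
def M₃ : SL2Z := ⟨!![-1, 1; -1, 0], by decide⟩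
def M₄ : SL2Z := ⟨!![0, -1; 1, -1], by decide⟩
def M₅ : SL2Z := ⟨!![1, 1; -1, 0], by decide⟩
def M₆ : SL2Z := ⟨!![0, -1; 1, 1], by decide⟩
def M₇ : SL2Z := ⟨!![1, -1; 1, 0], by decide⟩
def M₈ : SL2Z := ⟨!![0, 1; -1, 1], by decide⟩

/-! Write v = (a, c) for the first column of A and J for the quarter turn. Since det A = 1, the
second column is x v + J v / |v|² with x = (ab + cd)/(a² + c²), so the rationals of MA and A
differ by ⟨M v, M J v⟩ / (|v|² |M v|²). For the eight matrices M the numerator is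
±(a² ± ac − c²), hence at most 3|v|²/2 in absolute value; as the set is closed under inverses it
is also at most 3|M v|²/2, and for positive integers these two bounds force it to be at most
|v|² |M v|². So the two rationals, and then their ceilings, differ by at most 1. -/

theorem Int.abs_ceil_sub_ceil_le_one {R : Type*} [CommRing R] [LinearOrder R]
    [IsStrictOrderedRing R] [FloorRing R] {x y : R} (h : |x - y| ≤ 1) : |⌈x⌉ - ⌈y⌉| ≤ 1 := by
  rw [abs_sub_le_iff] at h ⊢
  have hx : ⌈x⌉ ≤ ⌈y⌉ + 1 := by rw [← Int.ceil_add_one]; exact Int.ceil_mono (by linarith)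
  have hy : ⌈y⌉ ≤ ⌈x⌉ + 1 := by rw [← Int.ceil_add_one]; exact Int.ceil_mono (by linarith)
  constructor <;> linarith

theorem abs_div_sub_div_le_one_iff {R : Type*} [Field R] [LinearOrder R] [IsStrictOrderedRing R]
    {n m d e : R} (hd : 0 < d) (he : 0 < e) :
    |n / d - m / e| ≤ 1 ↔ |n * e - m * d| ≤ d * e := by
  rw [div_sub_div _ _ hd.ne' he.ne', abs_div, abs_of_pos (mul_pos hd he),
    div_le_one (mul_pos hd he), mul_comm d m]

theorem two_mul_abs_sq_add_mul_sub_sq_le {R : Type*} [CommRing R] [LinearOrder R]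
    [IsStrictOrderedRing R] (a c e : R) (he : |e| ≤ 1) :
    2 * |a ^ 2 + e * a * c - c ^ 2| ≤ 3 * (a ^ 2 + c ^ 2) := by
  have hsq : |a ^ 2 - c ^ 2| ≤ a ^ 2 + c ^ 2 :=
    abs_le.2 ⟨by linarith [sq_nonneg a], by linarith [sq_nonneg c]⟩
  have hmul : |e * a * c| ≤ |a * c| := by
    rw [mul_assoc, abs_mul]
    exact mul_le_of_le_one_left (abs_nonneg _) he
  have hamgm : 2 * |a * c| ≤ a ^ 2 + c ^ 2 := by
    simpa only [abs_mul, sq_abs, mul_assoc] using two_mul_le_add_sq |a| |c|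
  calc 2 * |a ^ 2 + e * a * c - c ^ 2|
      = 2 * |(a ^ 2 - c ^ 2) + e * a * c| := by ring_nf
    _ ≤ 2 * (|a ^ 2 - c ^ 2| + |e * a * c|) := by gcongr; exact abs_add_le _ _
    _ ≤ 3 * (a ^ 2 + c ^ 2) := by linarith

theorem Int.abs_le_mul_of_two_mul_abs_le {q s t : ℤ} (hs : 0 < s) (ht : 0 < t)
    (hqs : 2 * |q| ≤ 3 * s) (hqt : 2 * |q| ≤ 3 * t) : |q| ≤ s * t := by
  rcases (show s = 1 ∨ 2 ≤ s by omega) with rfl | hs2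
  · omega
  · nlinarith

namespace Fceil

def num (A : SL2Z) : ℤ := A.1 0 0 * A.1 0 1 + A.1 1 0 * A.1 1 1

def den (A : SL2Z) : ℤ := A.1 0 0 ^ 2 + A.1 1 0 ^ 2

theorem den_pos (A : SL2Z) : 0 < den A := by
  have hdet := A.2
  rw [Matrix.det_fin_two] at hdet
  have hcol : A.1 0 0 ≠ 0 ∨ A.1 1 0 ≠ 0 := by
    by_contra! h
    simp [h.1, h.2] at hdet
  unfold den
  rcases hcol with h | h <;> positivity

theorem eq_ceil_num_div_den (A : SL2Z) : Fceil A = ⌈(num A : ℚ) / den A⌉ := rfl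

theorem abs_sub_le_one_of_abs_cross_le {B C : SL2Z}
    (h : |num B * den C - num C * den B| ≤ den B * den C) : |Fceil B - Fceil C| ≤ 1 := by
  have hB : (0 : ℚ) < den B := mod_cast den_pos B
  have hC : (0 : ℚ) < den C := mod_cast den_pos C
  rw [eq_ceil_num_div_den, eq_ceil_num_div_den]
  apply Int.abs_ceil_sub_ceil_le_one
  rw [abs_div_sub_div_le_one_iff hB hC]
  exact_mod_cast h

/-- `⟪M v, M (J v)⟫` for `v = (a, c)` and `J v = (-c, a)`. -/
def innerRot (M : Matrix (Fin 2) (Fin 2) ℤ) (a c : ℤ) : ℤ :=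
  (M 0 0 * a + M 0 1 * c) * (M 0 1 * a - M 0 0 * c) +
    (M 1 0 * a + M 1 1 * c) * (M 1 1 * a - M 1 0 * c)

theorem num_mul_den_sub (M A : SL2Z) :
    num (M * A) * den A - num A * den (M * A) = innerRot M (A.1 0 0) (A.1 1 0) := by
  have h : num (M * A) * den A - num A * den (M * A) =
      innerRot M (A.1 0 0) (A.1 1 0) * A.1.det := by
    simp only [num, den, innerRot, Matrix.SpecialLinearGroup.coe_mul, Matrix.mul_apply,
      Fin.sum_univ_two, Matrix.det_fin_two]
    ring
  rwa [A.2, mul_one] at h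

def moves : Set SL2Z := {M₁, M₂, M₃, M₄, M₅, M₆, M₇, M₈}

theorem exists_mul_eq_one {M : SL2Z} (hM : M ∈ moves) : ∃ N ∈ moves, N * M = 1 := by
  simp only [moves, Set.mem_insert_iff, Set.mem_singleton_iff] at hM
  rcases hM with rfl | rfl | rfl | rfl | rfl | rfl | rfl | rfl
  · exact ⟨M₂, by simp [moves], by decide⟩
  · exact ⟨M₁, by simp [moves], by decide⟩
  · exact ⟨M₄, by simp [moves], by decide⟩
  · exact ⟨M₃, by simp [moves], by decide⟩
  · exact ⟨M₆, by simp [moves], by decide⟩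
  · exact ⟨M₅, by simp [moves], by decide⟩
  · exact ⟨M₈, by simp [moves], by decide⟩
  · exact ⟨M₇, by simp [moves], by decide⟩

theorem two_mul_abs_innerRot_le {M : SL2Z} (hM : M ∈ moves) (a c : ℤ) :
    2 * |innerRot M a c| ≤ 3 * (a ^ 2 + c ^ 2) := by
  obtain ⟨e, he, hform⟩ :
      ∃ e : ℤ, |e| ≤ 1 ∧ |innerRot M a c| = |a ^ 2 + e * a * c - c ^ 2| := by
    simp only [moves, Set.mem_insert_iff, Set.mem_singleton_iff] at hM
    rcases hM with rfl | rfl | rfl | rfl | rfl | rfl | rfl | rfl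
    · exact ⟨-1, by norm_num, by simp [innerRot, M₁]; ring_nf⟩
    · exact ⟨1, by norm_num, by simp [innerRot, M₂]; ring_nf⟩
    · exact ⟨1, by norm_num, by rw [← abs_neg]; simp [innerRot, M₃]; ring_nf⟩
    · exact ⟨-1, by norm_num, by rw [← abs_neg]; simp [innerRot, M₄]; ring_nf⟩
    · exact ⟨-1, by norm_num, by simp [innerRot, M₅]; ring_nf⟩
    · exact ⟨1, by norm_num, by simp [innerRot, M₆]; ring_nf⟩
    · exact ⟨1, by norm_num, by rw [← abs_neg]; simp [innerRot, M₇]; ring_nf⟩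
    · exact ⟨-1, by norm_num, by rw [← abs_neg]; simp [innerRot, M₈]; ring_nf⟩
  rw [hform]
  exact two_mul_abs_sq_add_mul_sub_sq_le a c e he

theorem two_mul_abs_cross_le {M : SL2Z} (hM : M ∈ moves) (A : SL2Z) :
    2 * |num (M * A) * den A - num A * den (M * A)| ≤ 3 * den A := by
  rw [num_mul_den_sub]
  exact two_mul_abs_innerRot_le hM _ _

end Fceil

open Fceil in
/-- For every A ∈ SL(2,ℤ) and every M ∈ {±[[-1,-1],[1,0]], ±[[0,1],[-1,-1]],
±[[-1,1],[-1,0]], ±[[0,-1],[1,-1]]} one has |F(MA) − F(A)| ≤ 1. -/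
theorem Fceil_almost_invariant (A : SL2Z) (M : SL2Z)
    (hM : M ∈ ({M₁, M₂, M₃, M₄, M₅, M₆, M₇, M₈} : Set SL2Z)) :
    |Fceil (M * A) - Fceil A| ≤ 1 := by
  obtain ⟨N, hN, hNM⟩ := exists_mul_eq_one hM
  have hA := two_mul_abs_cross_le hM A
  have hMA := two_mul_abs_cross_le hN (M * A)
  rw [← mul_assoc, hNM, one_mul, abs_sub_comm] at hMA
  exact abs_sub_le_one_of_abs_cross_le
    (Int.abs_le_mul_of_two_mul_abs_le (den_pos _) (den_pos A) hMA hA)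
end
end
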